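/- Let n, m ≥ 1. Let A, B be n×n Hermitian matrices, ρ an n×n positive semidefinite matrix with trace 1, ξ a unit vector in ℂᵐ, U a unitary matrix on ℂⁿ ⊗ ℂᵐ, and M₁, M₂ commuting m×m Hermitian matrices (M₁M₂ = M₂M₁). Define ε(A)² = Tr[(ρ ⊗ ξξᴴ)·(Uᴴ(Iₙ ⊗ M₁)U − A ⊗ Iₘ)²], ε(B)² = Tr[(ρ ⊗ ξξᴴ)·(Uᴴ(Iₙ ⊗ M₂)U − B ⊗ Iₘ)²], σ(A)² = Tr[ρA²] − (Tr[ρA])², σ(B)² = Tr[ρB²] − (Tr[ρB])², and D = (1/2)·Tr√(XᴴX) with X = √ρ·(−i(AB − BA))·√ρ. Then ε(A)²·σ(B)² + σ(A)²·ε(B)² + 2·ε(A)·ε(B)·√(σ(A)²·σ(B)² − D²) ≥ D². -/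

import Mathlib

open Matrix Kronecker
open scoped ComplexOrder

noncomputable def Matrix.PosSemidef.sqrt {n : Type*} [Fintype n] [DecidableEq n]
    {𝕜 : Type*} [RCLike 𝕜] {A : Matrix n n 𝕜} (hA : A.PosSemidef) : Matrix n n 𝕜 :=
  hA.1.eigenvectorUnitary.1 * diagonal ((↑) ∘ (√·) ∘ hA.1.eigenvalues) *
    (star hA.1.eigenvectorUnitary : Matrix n n 𝕜)

namespace Matrix.PosSemidef
open scoped MatrixOrder

lemma sqrt_eq_cfc_sqrt {n : Type*} [Fintype n] [DecidableEq n] {𝕜 : Type*} [RCLike 𝕜]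
    {A : Matrix n n 𝕜} (hA : A.PosSemidef) : hA.sqrt = CFC.sqrt A := by
  rw [CFC.sqrt_eq_cfc, cfc_nnreal_eq_real _ A hA.nonneg, hA.1.cfc_eq]
  simp only [Matrix.PosSemidef.sqrt, IsHermitian.cfc, Unitary.conjStarAlgAut_apply]
  congr 3
  funext i
  simp [Real.coe_sqrt, Real.coe_toNNReal', max_eq_left (hA.eigenvalues_nonneg i)]

lemma posSemidef_sqrt {n : Type*} [Fintype n] [DecidableEq n] {𝕜 : Type*} [RCLike 𝕜]
    {A : Matrix n n 𝕜} (hA : A.PosSemidef) : hA.sqrt.PosSemidef := by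
  rw [sqrt_eq_cfc_sqrt]; exact (CFC.sqrt_nonneg A).posSemidef

lemma sqrt_mul_self {n : Type*} [Fintype n] [DecidableEq n] {𝕜 : Type*} [RCLike 𝕜]
    {A : Matrix n n 𝕜} (hA : A.PosSemidef) : hA.sqrt * hA.sqrt = A := by
  rw [sqrt_eq_cfc_sqrt]; exact CFC.sqrt_mul_sqrt_self A hA.nonneg

lemma eq_sqrt_of_sq_eq {n : Type*} [Fintype n] [DecidableEq n] {𝕜 : Type*} [RCLike 𝕜]
    {B : Matrix n n 𝕜} (hB : B.PosSemidef) {A : Matrix n n 𝕜} (hA : A.PosSemidef)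
    (h : B ^ 2 = A) : B = hA.sqrt := by
  rw [sqrt_eq_cfc_sqrt]; exact (CFC.sqrt_unique (by rw [← h, sq]) hB.nonneg).symm

end Matrix.PosSemidef


/-- The trace norm `Tr√(XᴴX)` of a complex square matrix. -/
noncomputable def traceNorm {k : Type*} [Fintype k] [DecidableEq k]
    (X : Matrix k k ℂ) : ℝ :=
  ((Matrix.posSemidef_conjTranspose_mul_self X).sqrt).trace.re

set_option linter.unusedSectionVars false

namespace SMUR

variable {k : Type*} [Fintype k] [DecidableEq k]

/-- Real (Frobenius) inner product on complex matrices. -/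
noncomputable def ip (X Y : Matrix k k ℂ) : ℝ := ((Xᴴ * Y).trace).re

lemma ip_self_nonneg (X : Matrix k k ℂ) : 0 ≤ ip X X := by
  have h : ((Xᴴ * X).trace) = ∑ i : k, ∑ j : k, (Complex.normSq (X j i) : ℂ) := by
    simp only [Matrix.trace, Matrix.diag, Matrix.mul_apply, Matrix.conjTranspose_apply]
    congr 1; funext i; congr 1; funext j
    rw [Complex.normSq_eq_conj_mul_self]; rfl
  unfold ip
  rw [h]
  push_cast
  rw [Complex.re_sum]
  refine Finset.sum_nonneg fun i _ => ?_
  rw [Complex.re_sum]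
  refine Finset.sum_nonneg fun j _ => ?_
  simp [Complex.normSq_nonneg]

lemma ip_symm (X Y : Matrix k k ℂ) : ip X Y = ip Y X := by
  unfold ip
  have : (Yᴴ * X) = (Xᴴ * Y)ᴴ := by
    rw [Matrix.conjTranspose_mul, Matrix.conjTranspose_conjTranspose]
  rw [this, Matrix.trace_conjTranspose]
  simp [Complex.conj_re]

lemma ip_sub_left (X Y Z : Matrix k k ℂ) : ip (X - Y) Z = ip X Z - ip Y Z := by
  unfold ip
  rw [Matrix.conjTranspose_sub, Matrix.sub_mul, Matrix.trace_sub]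
  simp [Complex.sub_re]

lemma ip_sub_right (X Y Z : Matrix k k ℂ) : ip X (Y - Z) = ip X Y - ip X Z := by
  unfold ip
  rw [Matrix.mul_sub, Matrix.trace_sub]
  simp [Complex.sub_re]

lemma ip_smul_left (r : ℝ) (X Y : Matrix k k ℂ) : ip ((r : ℂ) • X) Y = r * ip X Y := by
  unfold ip
  rw [Matrix.conjTranspose_smul, Matrix.smul_mul, Matrix.trace_smul]
  simp [Complex.re_ofReal_mul]

lemma ip_smul_right (r : ℝ) (X Y : Matrix k k ℂ) : ip X ((r : ℂ) • Y) = r * ip X Y := by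
  unfold ip
  rw [Matrix.mul_smul, Matrix.trace_smul]
  simp [Complex.re_ofReal_mul]

lemma ip_cauchy (X Y : Matrix k k ℂ) : (ip X Y) ^ 2 ≤ ip X X * ip Y Y := by
  have key : ∀ r : ℝ, 0 ≤ ip X X - 2 * r * ip X Y + r ^ 2 * ip Y Y := by
    intro r
    have h := ip_self_nonneg (X - (r : ℂ) • Y)
    rw [ip_sub_left, ip_sub_right, ip_sub_right, ip_smul_left, ip_smul_right,
      ip_smul_left, ip_smul_right] at h
    rw [← ip_symm X Y] at h
    ring_nf at h ⊢
    linarith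
  rcases eq_or_lt_of_le (ip_self_nonneg Y) with hY | hY
  · have hXY : ip X Y = 0 := by
      by_contra hne
      have h1 := key ((ip X X + 1) / (2 * ip X Y))
      rw [← hY] at h1
      have e1 : 2 * ((ip X X + 1) / (2 * ip X Y)) * ip X Y = ip X X + 1 := by
        field_simp
      simp only [smul_zero, mul_zero, zero_mul] at h1
      linarith [h1, e1]
    rw [hXY, ← hY]; ring_nf; positivity
  · have h2 : ip Y Y ≠ 0 := ne_of_gt hY
    have h1 := key (ip X Y / ip Y Y)
    have e1 : (ip X Y / ip Y Y) ^ 2 * ip Y Y = ip X Y ^ 2 / ip Y Y := by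
      field_simp
    have e2 : 2 * (ip X Y / ip Y Y) * ip X Y = 2 * (ip X Y ^ 2 / ip Y Y) := by
      field_simp
    have h3 : ip X Y ^ 2 / ip Y Y ≤ ip X X := by linarith [h1, e1, e2]
    have h4 := mul_le_mul_of_nonneg_right h3 hY.le
    rwa [div_mul_cancel₀ _ h2] at h4


lemma sqrt_aux {a b : ℝ} (hb : 0 ≤ b) (h : a ^ 2 ≤ b ^ 2) : a ≤ b := by
  nlinarith [sq_nonneg (a - b), sq_nonneg (a + b)]

lemma core (d s t w εa εb σb : ℝ) (hd : 0 ≤ d) (ht : 0 ≤ t) (hw : 0 ≤ w)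
    (hεa : 0 ≤ εa) (hεb : 0 ≤ εb) (hσb : 0 < σb)
    (hsw : s ^ 2 + w ^ 2 = σb ^ 2 * εa ^ 2)
    (hmain : σb ^ 2 * (d - s) ^ 2 ≤ εb ^ 2 * ((d - s) ^ 2 + (t + w) ^ 2)) :
    d ^ 2 * (σb ^ 2 - εb ^ 2) ≤ (εa * σb ^ 2 + εb * t) ^ 2 := by
  rcases le_or_gt σb εb with h | h
  · have h1 : σb ^ 2 - εb ^ 2 ≤ 0 := by nlinarith
    have h2 : d ^ 2 * (σb ^ 2 - εb ^ 2) ≤ 0 := mul_nonpos_of_nonneg_of_nonpos (sq_nonneg d) h1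
    nlinarith [sq_nonneg (εa * σb ^ 2 + εb * t)]
  · set k := Real.sqrt (σb ^ 2 - εb ^ 2) with hk
    have hkk : 0 ≤ σb ^ 2 - εb ^ 2 := by nlinarith
    have hk0 : 0 ≤ k := Real.sqrt_nonneg _
    have hk2 : k ^ 2 = σb ^ 2 - εb ^ 2 := Real.sq_sqrt hkk
    have h1 : (d - s) * k ≤ εb * (t + w) := by
      refine sqrt_aux (by positivity) ?_
      have : ((d - s) * k) ^ 2 = (d - s) ^ 2 * k ^ 2 := by ring
      rw [this, hk2]
      nlinarith [hmain]
    have h2 : s * k + εb * w ≤ εa * σb ^ 2 := by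
      refine sqrt_aux (by positivity) ?_
      have key : (s * k + εb * w) ^ 2 ≤ (s ^ 2 + w ^ 2) * (k ^ 2 + εb ^ 2) := by
        nlinarith [sq_nonneg (s * εb - w * k)]
      calc (s * k + εb * w) ^ 2 ≤ (s ^ 2 + w ^ 2) * (k ^ 2 + εb ^ 2) := key
        _ = (εa * σb ^ 2) ^ 2 := by rw [hsw, hk2]; ring
    have h3 : d * k ≤ εa * σb ^ 2 + εb * t := by nlinarith [h1, h2]
    have h4 : (d * k) ^ 2 ≤ (εa * σb ^ 2 + εb * t) ^ 2 := by
      have hdk : 0 ≤ d * k := mul_nonneg hd hk0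
      nlinarith [h3, hdk]
    calc d ^ 2 * (σb ^ 2 - εb ^ 2) = (d * k) ^ 2 := by rw [← hk2]; ring
      _ ≤ _ := h4

lemma branciard_scalar (σa σb εa εb d s g t w : ℝ)
    (hσb : 0 < σb) (hεb0 : 0 ≤ εb) (hεa0 : 0 ≤ εa) (hd0 : 0 ≤ d)
    (ht0 : 0 ≤ t) (hw0 : 0 ≤ w)
    (ht2 : t ^ 2 = σa ^ 2 * σb ^ 2 - d ^ 2)
    (hw2 : w ^ 2 = σb ^ 2 * εa ^ 2 - s ^ 2)
    (hV2 : (d - s) ^ 2 ≤ (σa ^ 2 + εa ^ 2 - 2 * g) * εb ^ 2)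
    (hV3 : d * s - t * w ≤ σb ^ 2 * g) :
    d ^ 2 ≤ εa ^ 2 * σb ^ 2 + σa ^ 2 * εb ^ 2 + 2 * εa * εb * t := by
  have hmain : σb ^ 2 * (d - s) ^ 2 ≤ εb ^ 2 * ((d - s) ^ 2 + (t + w) ^ 2) := by
    have e1 : σb ^ 2 * (d - s) ^ 2 ≤ σb ^ 2 * ((σa ^ 2 + εa ^ 2 - 2 * g) * εb ^ 2) :=
      mul_le_mul_of_nonneg_left hV2 (sq_nonneg σb)
    have e4 : σb ^ 2 * ((σa ^ 2 + εa ^ 2 - 2 * g) * εb ^ 2)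
        = εb ^ 2 * (d ^ 2 + t ^ 2 + s ^ 2 + w ^ 2) - 2 * εb ^ 2 * (σb ^ 2 * g) := by
      linear_combination (-(εb ^ 2)) * ht2 + (-(εb ^ 2)) * hw2
    have e5 : 2 * εb ^ 2 * (d * s - t * w) ≤ 2 * εb ^ 2 * (σb ^ 2 * g) :=
      mul_le_mul_of_nonneg_left hV3 (by positivity)
    have e6 : εb ^ 2 * ((d - s) ^ 2 + (t + w) ^ 2)
        = εb ^ 2 * (d ^ 2 + t ^ 2 + s ^ 2 + w ^ 2) - 2 * εb ^ 2 * (d * s - t * w) := by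
      ring
    linarith
  have hcore := core d s t w εa εb σb hd0 ht0 hw0 hεa0 hεb0 hσb
    (by linear_combination hw2) hmain
  have e7 : σa ^ 2 * εb ^ 2 * σb ^ 2 = εb ^ 2 * d ^ 2 + εb ^ 2 * t ^ 2 := by
    linear_combination (-(εb ^ 2)) * ht2
  have hfin : d ^ 2 * σb ^ 2 ≤
      (εa ^ 2 * σb ^ 2 + σa ^ 2 * εb ^ 2 + 2 * εa * εb * t) * σb ^ 2 := by
    nlinarith [hcore, e7]
  exact le_of_mul_le_mul_right hfin (by positivity)

set_option maxHeartbeats 1000000 in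
lemma branciard {k : Type*} [Fintype k] [DecidableEq k]
    (a b ah bh : Matrix k k ℂ) (σa σb εa εb d : ℝ)
    (hσa0 : 0 ≤ σa) (hσb0 : 0 ≤ σb) (hεa0 : 0 ≤ εa) (hεb0 : 0 ≤ εb) (hd0 : 0 ≤ d)
    (hσa : ip a a = σa ^ 2) (hσb : ip b b = σb ^ 2)
    (hεa : ip (a - ah) (a - ah) = εa ^ 2) (hεb : ip (b - bh) (b - bh) = εb ^ 2)
    (hab : ip a b = d) (hperp : ip ah bh = 0) :
    d ^ 2 ≤ εa ^ 2 * σb ^ 2 + σa ^ 2 * εb ^ 2 +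
      2 * εa * εb * Real.sqrt (σa ^ 2 * σb ^ 2 - d ^ 2) := by
  have hba : ip b a = d := by rw [ip_symm]; exact hab
  have hcs_d : d ^ 2 ≤ σa ^ 2 * σb ^ 2 := by
    have := ip_cauchy a b; rw [hσa, hσb, hab] at this; linarith
  set t := Real.sqrt (σa ^ 2 * σb ^ 2 - d ^ 2) with htdef
  have ht0 : 0 ≤ t := Real.sqrt_nonneg _
  have ht2 : t ^ 2 = σa ^ 2 * σb ^ 2 - d ^ 2 := Real.sq_sqrt (by linarith)
  rcases eq_or_lt_of_le hσb0 with hcb | hcb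
  · -- degenerate case σb = 0
    have hσbz : σb = 0 := hcb.symm
    have h1 : d ^ 2 ≤ 0 := by rw [hσbz] at hcs_d; nlinarith [hcs_d]
    have h2 : d ^ 2 = 0 := le_antisymm h1 (sq_nonneg d)
    have h3 : 0 ≤ 2 * εa * εb * t := by positivity
    nlinarith [sq_nonneg σa, sq_nonneg σb, sq_nonneg εa, sq_nonneg εb, h2, h3,
      mul_nonneg (sq_nonneg σa) (sq_nonneg εb), mul_nonneg (sq_nonneg εa) (sq_nonneg σb)]
  · -- main case σb > 0
    set s := ip (a - ah) b with hs
    have hs2 : s ^ 2 ≤ εa ^ 2 * σb ^ 2 := by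
      have := ip_cauchy (a - ah) b; rw [hεa, hσb, ← hs] at this; linarith
    set w := Real.sqrt (σb ^ 2 * εa ^ 2 - s ^ 2) with hwdef
    have hw0 : 0 ≤ w := Real.sqrt_nonneg _
    have hw2 : w ^ 2 = σb ^ 2 * εa ^ 2 - s ^ 2 := Real.sq_sqrt (by nlinarith)
    -- the identity d - s = ⟨ah, b - bh⟩
    have hxb : ip (a - ah) b = ip a b - ip ah b := by rw [ip_sub_left]
    have hid : ip ah (b - bh) = d - s := by
      rw [ip_sub_right, hperp]
      have : ip ah b = d - s := by rw [hs, hxb, hab]; ring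
      rw [this]; ring
    -- expansion of ‖ah‖²
    set g := ip a (a - ah) with hgd
    have hax : ip a (a - ah) = g := hgd.symm
    have haah : ip a ah = σa ^ 2 - g := by
      have : g = ip a a - ip a ah := by rw [hgd, ip_sub_right]
      rw [hσa] at this; linarith
    have haha : ip ah a = σa ^ 2 - g := by rw [ip_symm]; exact haah
    have haa' : ip ah ah = σa ^ 2 + εa ^ 2 - 2 * g := by
      have h := hεa
      simp only [ip_sub_left, ip_sub_right] at h
      rw [hσa, haah, haha] at h
      linarith
    -- V2 via Cauchy-Schwarz
    have hV2 : (d - s) ^ 2 ≤ (σa ^ 2 + εa ^ 2 - 2 * g) * εb ^ 2 := by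
      have := ip_cauchy ah (b - bh)
      rw [hid, haa', hεb] at this
      linarith
    -- V3 via Cauchy-Schwarz on projected vectors
    have hV3 : d * s - t * w ≤ σb ^ 2 * g := by
      have hahb : ip ah b = d - s := by
        have : ip (a - ah) b = ip a b - ip ah b := by rw [ip_sub_left]
        rw [← hs, hab] at this; linarith
      have hbah : ip b ah = d - s := by rw [ip_symm]; exact hahb
      have huu : ip (((σb ^ 2 : ℝ) : ℂ) • a - ((d : ℝ) : ℂ) • b)
          (((σb ^ 2 : ℝ) : ℂ) • a - ((d : ℝ) : ℂ) • b) = σb ^ 2 * t ^ 2 := by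
        simp only [ip_sub_left, ip_sub_right, ip_smul_left, ip_smul_right]
        rw [hσa, hσb, hab, hba]
        linear_combination (-(σb ^ 2)) * ht2
      have hvv : ip (((σb ^ 2 : ℝ) : ℂ) • (a - ah) - ((s : ℝ) : ℂ) • b)
          (((σb ^ 2 : ℝ) : ℂ) • (a - ah) - ((s : ℝ) : ℂ) • b) = σb ^ 2 * w ^ 2 := by
        simp only [ip_sub_left, ip_sub_right, ip_smul_left, ip_smul_right]
        rw [hσa, hσb, hab, hba, haah, haha, haa', hahb, hbah]
        linear_combination (-(σb ^ 2)) * hw2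
      have huv : ip (((σb ^ 2 : ℝ) : ℂ) • a - ((d : ℝ) : ℂ) • b)
          (((σb ^ 2 : ℝ) : ℂ) • (a - ah) - ((s : ℝ) : ℂ) • b)
          = σb ^ 2 * (σb ^ 2 * g - d * s) := by
        simp only [ip_sub_left, ip_sub_right, ip_smul_left, ip_smul_right]
        rw [hσb, hab, hba, haah, hbah]
        have hgg : g = σa ^ 2 - (σa ^ 2 - g) := by ring
        rw [hσa]
        ring
      have hcs := ip_cauchy (((σb ^ 2 : ℝ) : ℂ) • a - ((d : ℝ) : ℂ) • b)
        (((σb ^ 2 : ℝ) : ℂ) • (a - ah) - ((s : ℝ) : ℂ) • b)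
      rw [huu, hvv, huv] at hcs
      have hσb4 : (0 : ℝ) < σb ^ 2 * σb ^ 2 := by positivity
      have h5 : (σb ^ 2 * g - d * s) ^ 2 ≤ (t * w) ^ 2 := by
        have e1 : (σb ^ 2 * (σb ^ 2 * g - d * s)) ^ 2
            = (σb ^ 2 * σb ^ 2) * (σb ^ 2 * g - d * s) ^ 2 := by ring
        have e2 : σb ^ 2 * t ^ 2 * (σb ^ 2 * w ^ 2)
            = (σb ^ 2 * σb ^ 2) * (t * w) ^ 2 := by ring
        rw [e1, e2] at hcs
        exact le_of_mul_le_mul_left hcs hσb4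
      have h6 : -(t * w) ≤ σb ^ 2 * g - d * s := by
        have := sqrt_aux (a := -(σb ^ 2 * g - d * s)) (b := t * w)
          (mul_nonneg ht0 hw0) (by rw [neg_sq]; exact h5)
        linarith
      linarith
    exact branciard_scalar σa σb εa εb d s g t w hcb hεb0 hεa0 hd0 ht0 hw0 ht2 hw2 hV2 hV3


lemma kron_conjTranspose {k l : Type*} [Fintype k] [Fintype l]
    (A : Matrix k k ℂ) (B : Matrix l l ℂ) : (A ⊗ₖ B)ᴴ = Aᴴ ⊗ₖ Bᴴ := by
  ext ⟨i, j⟩ ⟨i', j'⟩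
  simp [Matrix.conjTranspose_apply, Matrix.kroneckerMap_apply, star_mul']

lemma sub_kron {k l : Type*} [Fintype k] [Fintype l]
    (A B : Matrix k k ℂ) (C : Matrix l l ℂ) : (A - B) ⊗ₖ C = A ⊗ₖ C - B ⊗ₖ C := by
  ext ⟨i, j⟩ ⟨i', j'⟩
  simp [Matrix.kroneckerMap_apply, sub_mul]

lemma kron_collapse_left {k l : Type*} [Fintype k] [Fintype l] [DecidableEq k] [DecidableEq l]
    (G H : Matrix l l ℂ) (Z : Matrix (k × l) (k × l) ℂ) :
    ((1 : Matrix k k ℂ) ⊗ₖ G) * (((1 : Matrix k k ℂ) ⊗ₖ H) * Z)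
      = ((1 : Matrix k k ℂ) ⊗ₖ (G * H)) * Z := by
  rw [← Matrix.mul_assoc, ← Matrix.mul_kronecker_mul, Matrix.one_mul]

lemma kron_collapse {k l : Type*} [Fintype k] [Fintype l] [DecidableEq k] [DecidableEq l]
    (G H : Matrix k k ℂ) (Z : Matrix (k × l) (k × l) ℂ) :
    (G ⊗ₖ (1 : Matrix l l ℂ)) * ((H ⊗ₖ (1 : Matrix l l ℂ)) * Z)
      = ((G * H) ⊗ₖ (1 : Matrix l l ℂ)) * Z := by
  rw [← Matrix.mul_assoc, ← Matrix.mul_kronecker_mul, Matrix.one_mul]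

/-- A Hermitian unitary `W` with `Tr(XW) = ‖X‖₁` for a Hermitian `X`. -/
lemma sign_factor {k : Type*} [Fintype k] [DecidableEq k]
    (X : Matrix k k ℂ) (hX : X.IsHermitian) :
    ∃ W : Matrix k k ℂ, Wᴴ = W ∧ W * W = 1 ∧
      (X * W).trace = ((traceNorm X : ℝ) : ℂ) ∧ 0 ≤ traceNorm X := by
  classical
  set V : Matrix k k ℂ := (Matrix.IsHermitian.eigenvectorUnitary hX : Matrix k k ℂ) with hVdef
  have hV1 : Vᴴ * V = 1 := by
    rw [← Matrix.star_eq_conjTranspose]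
    exact Unitary.coe_star_mul_self (Matrix.IsHermitian.eigenvectorUnitary hX)
  have hV2 : V * Vᴴ = 1 := by
    rw [← Matrix.star_eq_conjTranspose]
    exact Unitary.coe_mul_star_self (Matrix.IsHermitian.eigenvectorUnitary hX)
  set lam : k → ℝ := hX.eigenvalues with hlam
  have hspec : X = V * Matrix.diagonal (fun i => ((lam i : ℝ) : ℂ)) * Vᴴ := by
    have h := hX.spectral_theorem
    rw [← Matrix.star_eq_conjTranspose]
    rw [Unitary.conjStarAlgAut_apply] at h
    exact h
  set sg : k → ℂ := fun i => if 0 ≤ lam i then 1 else -1 with hsg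
  have collapse : ∀ (D1 D2 : Matrix k k ℂ),
      (V * D1 * Vᴴ) * (V * D2 * Vᴴ) = V * (D1 * D2) * Vᴴ := by
    intro D1 D2
    calc (V * D1 * Vᴴ) * (V * D2 * Vᴴ) = V * (D1 * ((Vᴴ * V) * (D2 * Vᴴ))) := by
          simp only [Matrix.mul_assoc]
      _ = V * (D1 * D2) * Vᴴ := by rw [hV1, Matrix.one_mul]; simp only [Matrix.mul_assoc]
  have htrV : ∀ (D : Matrix k k ℂ), (V * D * Vᴴ).trace = D.trace := by
    intro D
    rw [Matrix.trace_mul_cycle, hV1, Matrix.one_mul]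
  have hQ : (Matrix.posSemidef_conjTranspose_mul_self X).sqrt
      = V * Matrix.diagonal (fun i => ((|lam i| : ℝ) : ℂ)) * Vᴴ := by
    have hpsd : (V * Matrix.diagonal (fun i => ((|lam i| : ℝ) : ℂ)) * Vᴴ).PosSemidef := by
      refine Matrix.PosSemidef.mul_mul_conjTranspose_same ?_ V
      refine Matrix.posSemidef_diagonal_iff.mpr fun i => ?_
      rw [Complex.zero_le_real]
      exact abs_nonneg _
    have hsq : (V * Matrix.diagonal (fun i => ((|lam i| : ℝ) : ℂ)) * Vᴴ) ^ 2 = Xᴴ * X := by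
      rw [hX.eq, pow_two, collapse, Matrix.diagonal_mul_diagonal]
      conv_rhs => rw [hspec]
      rw [collapse, Matrix.diagonal_mul_diagonal]
      have hfn : (fun i => ((|lam i| : ℝ) : ℂ) * ((|lam i| : ℝ) : ℂ))
          = (fun i => ((lam i : ℝ) : ℂ) * ((lam i : ℝ) : ℂ)) := by
        funext i
        rw [← Complex.ofReal_mul, ← Complex.ofReal_mul, abs_mul_abs_self]
      rw [hfn]
    exact (hpsd.eq_sqrt_of_sq_eq _ hsq).symm
  have htn : traceNorm X = ∑ i, |lam i| := by
    unfold traceNorm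
    rw [hQ, htrV, Matrix.trace_diagonal, Complex.re_sum]
    norm_num
  have htn0 : 0 ≤ traceNorm X := by
    rw [htn]; exact Finset.sum_nonneg fun i _ => abs_nonneg _
  refine ⟨V * Matrix.diagonal sg * Vᴴ, ?_, ?_, ?_, htn0⟩
  · rw [Matrix.conjTranspose_mul, Matrix.conjTranspose_mul,
      Matrix.conjTranspose_conjTranspose, Matrix.diagonal_conjTranspose]
    have : star sg = sg := by
      funext i; by_cases h : 0 ≤ lam i <;> simp [hsg, h]
    rw [this, Matrix.mul_assoc]
  · rw [collapse, Matrix.diagonal_mul_diagonal]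
    have : (fun i => sg i * sg i) = fun _ => (1 : ℂ) := by
      funext i; by_cases h : 0 ≤ lam i <;> simp [hsg, h]
    rw [this, Matrix.diagonal_one, Matrix.mul_one, hV2]
  · have hXW : X * (V * Matrix.diagonal sg * Vᴴ)
        = V * Matrix.diagonal (fun i => ((|lam i| : ℝ) : ℂ)) * Vᴴ := by
      conv_lhs => rw [hspec]
      rw [collapse, Matrix.diagonal_mul_diagonal]
      have hfn : (fun i => ((lam i : ℝ) : ℂ) * sg i) = fun i => ((|lam i| : ℝ) : ℂ) := by
        funext i
        simp only [Pi.mul_apply, hsg]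
        by_cases h : 0 ≤ lam i
        · simp [h, abs_of_nonneg h]
        · simp [h, abs_of_neg (not_le.mp h)]
      rw [hfn]
    rw [hXW, htrV, Matrix.trace_diagonal, htn]
    push_cast
    rfl

end SMUR

open SMUR in
set_option maxHeartbeats 4000000 in
/-- The uncertainty relation for simultaneous measurements in the
finite-dimensional case: a measuring process with probe space `ℂᵐ`, initial
probe vector state `ξ`, measuring interaction `U`, and two commuting meter
observables `M₁`, `M₂` used to measure `A` and `B`, respectively. -/
theorem simultaneous_measurement_uncertainty_relation
    {n m : ℕ} (hn : 1 ≤ n) (hm : 1 ≤ m)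
    (A B : Matrix (Fin n) (Fin n) ℂ) (hA : A.IsHermitian) (hB : B.IsHermitian)
    (ρ : Matrix (Fin n) (Fin n) ℂ) (hρ : ρ.PosSemidef) (hρtr : ρ.trace = 1)
    (ξ : Fin m → ℂ) (hξ : star ξ ⬝ᵥ ξ = 1)
    (U : Matrix (Fin n × Fin m) (Fin n × Fin m) ℂ)
    (hU : U ∈ Matrix.unitaryGroup (Fin n × Fin m) ℂ)
    (M₁ M₂ : Matrix (Fin m) (Fin m) ℂ)
    (hM₁ : M₁.IsHermitian) (hM₂ : M₂.IsHermitian) (hMcomm : M₁ * M₂ = M₂ * M₁)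
    (εA εB σA σB D : ℝ)
    (hεA : εA = Real.sqrt ((((ρ ⊗ₖ vecMulVec ξ (star ξ)) *
      (Uᴴ * ((1 : Matrix (Fin n) (Fin n) ℂ) ⊗ₖ M₁) * U -
        A ⊗ₖ (1 : Matrix (Fin m) (Fin m) ℂ)) ^ 2).trace).re))
    (hεB : εB = Real.sqrt ((((ρ ⊗ₖ vecMulVec ξ (star ξ)) *
      (Uᴴ * ((1 : Matrix (Fin n) (Fin n) ℂ) ⊗ₖ M₂) * U -
        B ⊗ₖ (1 : Matrix (Fin m) (Fin m) ℂ)) ^ 2).trace).re))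
    (hσA : σA = Real.sqrt (((ρ * (A * A)).trace).re - (((ρ * A).trace).re) ^ 2))
    (hσB : σB = Real.sqrt (((ρ * (B * B)).trace).re - (((ρ * B).trace).re) ^ 2))
    (hD : D = (1 / 2 : ℝ) *
      traceNorm (hρ.sqrt * ((-Complex.I) • (A * B - B * A)) * hρ.sqrt)) :
    εA ^ 2 * σB ^ 2 + σA ^ 2 * εB ^ 2 +
      2 * εA * εB * Real.sqrt (σA ^ 2 * σB ^ 2 - D ^ 2) ≥ D ^ 2 := by
  classical
  set R := hρ.sqrt with hRdef
  have hRH : Rᴴ = R := hρ.posSemidef_sqrt.1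
  have hRR : R * R = ρ := hρ.sqrt_mul_self
  set P := vecMulVec ξ (star ξ) with hPdef
  have hPH : Pᴴ = P := by
    ext i j
    simp [hPdef, Matrix.conjTranspose_apply, Matrix.vecMulVec_apply, Pi.star_apply, mul_comm]
  have hξ' : ∑ j, star (ξ j) * ξ j = 1 := by
    simpa [dotProduct, Pi.star_apply] using hξ
  have hPP : P * P = P := by
    ext i j
    simp only [Matrix.mul_apply, hPdef, Matrix.vecMulVec_apply, Pi.star_apply]
    have e : ∀ x ∈ Finset.univ, ξ i * star (ξ x) * (ξ x * star (ξ j))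
        = (ξ i * star (ξ j)) * (star (ξ x) * ξ x) := by intros; ring
    rw [Finset.sum_congr rfl e, ← Finset.mul_sum, hξ', mul_one]
  have hPtr : P.trace = 1 := by
    rw [Matrix.trace, ← hξ']
    apply Finset.sum_congr rfl
    intros i _
    simp [Matrix.diag, hPdef, Matrix.vecMulVec_apply, mul_comm]
  set S := R ⊗ₖ P with hSdef
  have hSH : Sᴴ = S := by rw [hSdef, kron_conjTranspose, hRH, hPH]
  have hSS : S * S = ρ ⊗ₖ P := by rw [hSdef, ← Matrix.mul_kronecker_mul, hRR, hPP]
  -- sign factor for X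
  set Cc := (-Complex.I) • (A * B - B * A) with hCcdef
  set X := R * Cc * R with hXdef
  have hCcH : Ccᴴ = Cc := by
    rw [hCcdef, Matrix.conjTranspose_smul, Matrix.conjTranspose_sub,
      Matrix.conjTranspose_mul, Matrix.conjTranspose_mul, hA.eq, hB.eq]
    simp [smul_sub]
    abel
  have hXH : X.IsHermitian := by
    rw [Matrix.IsHermitian, hXdef, Matrix.conjTranspose_mul, Matrix.conjTranspose_mul,
      hRH, hCcH]
    simp only [Matrix.mul_assoc]
  obtain ⟨W, hWH, hWW, hWtr, htn0⟩ := sign_factor X hXH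
  -- mean values
  set μA := (ρ * A).trace with hμAdef
  set μB := (ρ * B).trace with hμBdef
  have hμAr : star μA = μA := by
    rw [hμAdef, ← Matrix.trace_conjTranspose, Matrix.conjTranspose_mul, hA.eq, hρ.1.eq,
      Matrix.trace_mul_comm]
  have hμBr : star μB = μB := by
    rw [hμBdef, ← Matrix.trace_conjTranspose, Matrix.conjTranspose_mul, hB.eq, hρ.1.eq,
      Matrix.trace_mul_comm]
  have hμAim : μA.im = 0 := Complex.conj_eq_iff_im.mp hμAr
  have hμBim : μB.im = 0 := Complex.conj_eq_iff_im.mp hμBr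
  set A₀ := A - μA • 1 with hA0def
  set B₀ := B - μB • 1 with hB0def
  have hA0H : A₀ᴴ = A₀ := by
    rw [hA0def, Matrix.conjTranspose_sub, Matrix.conjTranspose_smul,
      Matrix.conjTranspose_one, hA.eq, hμAr]
  have hB0H : B₀ᴴ = B₀ := by
    rw [hB0def, Matrix.conjTranspose_sub, Matrix.conjTranspose_smul,
      Matrix.conjTranspose_one, hB.eq, hμBr]
  set C₁ := Uᴴ * ((1 : Matrix (Fin n) (Fin n) ℂ) ⊗ₖ M₁) * U with hC1def
  set C₂ := Uᴴ * ((1 : Matrix (Fin n) (Fin n) ℂ) ⊗ₖ M₂) * U with hC2def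
  have hC1H : C₁ᴴ = C₁ := by
    rw [hC1def, Matrix.conjTranspose_mul, Matrix.conjTranspose_mul,
      Matrix.conjTranspose_conjTranspose, kron_conjTranspose, Matrix.conjTranspose_one, hM₁.eq]
    simp only [Matrix.mul_assoc]
  have hC2H : C₂ᴴ = C₂ := by
    rw [hC2def, Matrix.conjTranspose_mul, Matrix.conjTranspose_mul,
      Matrix.conjTranspose_conjTranspose, kron_conjTranspose, Matrix.conjTranspose_one, hM₂.eq]
    simp only [Matrix.mul_assoc]
  set N₁ := C₁ - A ⊗ₖ (1 : Matrix (Fin m) (Fin m) ℂ) with hN1def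
  set N₂ := C₂ - B ⊗ₖ (1 : Matrix (Fin m) (Fin m) ℂ) with hN2def
  have hN1H : N₁ᴴ = N₁ := by
    rw [hN1def, Matrix.conjTranspose_sub, hC1H, kron_conjTranspose,
      Matrix.conjTranspose_one, hA.eq]
  have hN2H : N₂ᴴ = N₂ := by
    rw [hN2def, Matrix.conjTranspose_sub, hC2H, kron_conjTranspose,
      Matrix.conjTranspose_one, hB.eq]
  set Wt := W ⊗ₖ (1 : Matrix (Fin m) (Fin m) ℂ) with hWtdef
  have hWtH : Wtᴴ = Wt := by
    rw [hWtdef, kron_conjTranspose, hWH, Matrix.conjTranspose_one]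
  have hWtWt : Wt * Wt = 1 := by
    rw [hWtdef, ← Matrix.mul_kronecker_mul, hWW, Matrix.one_mul, Matrix.one_kronecker_one]
  -- commutation of the meter observables
  have hUU : U * Uᴴ = 1 := by
    rw [← Matrix.star_eq_conjTranspose]
    exact Matrix.mem_unitaryGroup_iff.mp hU
  have hcomm : C₁ * C₂ = C₂ * C₁ := by
    have key : ∀ Mx My : Matrix (Fin m) (Fin m) ℂ,
        (Uᴴ * ((1 : Matrix (Fin n) (Fin n) ℂ) ⊗ₖ Mx) * U) *
          (Uᴴ * ((1 : Matrix (Fin n) (Fin n) ℂ) ⊗ₖ My) * U)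
        = Uᴴ * ((1 : Matrix (Fin n) (Fin n) ℂ) ⊗ₖ (Mx * My)) * U := by
      intro Mx My
      calc (Uᴴ * ((1 : Matrix (Fin n) (Fin n) ℂ) ⊗ₖ Mx) * U) *
          (Uᴴ * ((1 : Matrix (Fin n) (Fin n) ℂ) ⊗ₖ My) * U)
          = Uᴴ * (((1 : Matrix (Fin n) (Fin n) ℂ) ⊗ₖ Mx) * ((U * Uᴴ) *
            (((1 : Matrix (Fin n) (Fin n) ℂ) ⊗ₖ My) * U))) := by
            simp only [Matrix.mul_assoc]
        _ = Uᴴ * (((1 : Matrix (Fin n) (Fin n) ℂ) ⊗ₖ Mx) *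
            (((1 : Matrix (Fin n) (Fin n) ℂ) ⊗ₖ My) * U)) := by
            rw [hUU, Matrix.one_mul]
        _ = Uᴴ * ((1 : Matrix (Fin n) (Fin n) ℂ) ⊗ₖ (Mx * My)) * U := by
            rw [kron_collapse_left]
            simp only [Matrix.mul_assoc]
    rw [hC1def, hC2def, key, key, hMcomm]
  have hcomm0 : (C₂ - μB • 1) * (C₁ - μA • 1) = (C₁ - μA • 1) * (C₂ - μB • 1) := by
    simp only [Matrix.sub_mul, Matrix.mul_sub, Matrix.smul_mul, Matrix.mul_smul,
      Matrix.one_mul, Matrix.mul_one, smul_smul, ← hcomm]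
    module
  -- the sandwich trace identities
  have sand : ∀ G W' : Matrix (Fin n) (Fin n) ℂ,
      (S * ((G ⊗ₖ (1 : Matrix (Fin m) (Fin m) ℂ)) *
        (S * (W' ⊗ₖ (1 : Matrix (Fin m) (Fin m) ℂ))))).trace = (R * G * R * W').trace := by
    intro G W'
    have e : S * ((G ⊗ₖ (1 : Matrix (Fin m) (Fin m) ℂ)) *
        (S * (W' ⊗ₖ (1 : Matrix (Fin m) (Fin m) ℂ)))) = (R * G * R * W') ⊗ₖ P := by
      rw [hSdef, ← Matrix.mul_kronecker_mul, ← Matrix.mul_kronecker_mul, ← Matrix.mul_kronecker_mul,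
        Matrix.mul_one, Matrix.one_mul, hPP]
      simp only [Matrix.mul_assoc]
    rw [e, Matrix.trace_kronecker, hPtr, mul_one]
  have sand1 : ∀ G : Matrix (Fin n) (Fin n) ℂ,
      (S * ((G ⊗ₖ (1 : Matrix (Fin m) (Fin m) ℂ)) * S)).trace = (ρ * G).trace := by
    intro G
    have e : S * ((G ⊗ₖ (1 : Matrix (Fin m) (Fin m) ℂ)) * S) = (R * G * R) ⊗ₖ P := by
      rw [hSdef, ← Matrix.mul_kronecker_mul, ← Matrix.mul_kronecker_mul, Matrix.one_mul, hPP]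
      simp only [Matrix.mul_assoc]
    rw [e, Matrix.trace_kronecker, hPtr, mul_one, Matrix.trace_mul_cycle, hRR]
  -- the four vectors
  set va := Complex.I • ((A₀ ⊗ₖ (1 : Matrix (Fin m) (Fin m) ℂ)) * S) with hvadef
  set vah := Complex.I • ((C₁ - μA • 1) * S) with hvahdef
  set vb := (B₀ ⊗ₖ (1 : Matrix (Fin m) (Fin m) ℂ)) * S * Wt with hvbdef
  set vbh := (C₂ - μB • 1) * S * Wt with hvbhdef
  have hstarI : (star Complex.I) = -Complex.I := by simp
  -- conjugate transposes of the vectors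
  have hvaH : vaᴴ = (-Complex.I) • (S * (A₀ ⊗ₖ (1 : Matrix (Fin m) (Fin m) ℂ))) := by
    rw [hvadef, Matrix.conjTranspose_smul, Matrix.conjTranspose_mul, hSH,
      kron_conjTranspose, hA0H, Matrix.conjTranspose_one, hstarI]
  have hvahH : vahᴴ = (-Complex.I) • (S * (C₁ - μA • 1)) := by
    rw [hvahdef, Matrix.conjTranspose_smul, Matrix.conjTranspose_mul, hSH, hstarI,
      Matrix.conjTranspose_sub, hC1H, Matrix.conjTranspose_smul, Matrix.conjTranspose_one, hμAr]
  have hvbH : vbᴴ = Wt * (S * (B₀ ⊗ₖ (1 : Matrix (Fin m) (Fin m) ℂ))) := by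
    rw [hvbdef, Matrix.conjTranspose_mul, Matrix.conjTranspose_mul, hSH, hWtH,
      kron_conjTranspose, hB0H, Matrix.conjTranspose_one]
  -- (1) ‖va‖² = variance of A
  have hA0A0 : ρ * (A₀ * A₀) = ρ * (A * A) - (2 * μA) • (ρ * A) + (μA * μA) • ρ := by
    rw [hA0def]
    simp only [Matrix.sub_mul, Matrix.mul_sub, Matrix.smul_mul, Matrix.mul_smul,
      Matrix.mul_one, Matrix.one_mul, smul_smul, smul_sub]
    module
  have htrA0 : (ρ * (A₀ * A₀)).trace = (ρ * (A * A)).trace - μA * μA := by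
    rw [hA0A0, Matrix.trace_add, Matrix.trace_sub, Matrix.trace_smul, Matrix.trace_smul,
      hρtr, ← hμAdef]
    simp only [smul_eq_mul]
    ring
  have hipaa : ip va va = ((ρ * (A * A)).trace).re - μA.re ^ 2 := by
    have e : vaᴴ * va = S * (((A₀ * A₀) ⊗ₖ (1 : Matrix (Fin m) (Fin m) ℂ)) * S) := by
      rw [hvaH, hvadef, Matrix.smul_mul, Matrix.mul_smul, smul_smul]
      rw [show (-Complex.I) * Complex.I = 1 by simp, one_smul]
      simp only [Matrix.mul_assoc]
      rw [kron_collapse]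
    unfold SMUR.ip
    rw [e, sand1, htrA0, Complex.sub_re, Complex.mul_re, hμAim]
    ring
  -- (2) ‖vb‖² = variance of B
  have hB0B0 : ρ * (B₀ * B₀) = ρ * (B * B) - (2 * μB) • (ρ * B) + (μB * μB) • ρ := by
    rw [hB0def]
    simp only [Matrix.sub_mul, Matrix.mul_sub, Matrix.smul_mul, Matrix.mul_smul,
      Matrix.mul_one, Matrix.one_mul, smul_smul, smul_sub]
    module
  have htrB0 : (ρ * (B₀ * B₀)).trace = (ρ * (B * B)).trace - μB * μB := by
    rw [hB0B0, Matrix.trace_add, Matrix.trace_sub, Matrix.trace_smul, Matrix.trace_smul,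
      hρtr, ← hμBdef]
    simp only [smul_eq_mul]
    ring
  have hipbb : ip vb vb = ((ρ * (B * B)).trace).re - μB.re ^ 2 := by
    have e : vbᴴ * vb = Wt * (S * (((B₀ * B₀) ⊗ₖ (1 : Matrix (Fin m) (Fin m) ℂ)) * (S * Wt))) := by
      rw [hvbH, hvbdef]
      simp only [Matrix.mul_assoc]
      rw [kron_collapse]
    have etr : (vbᴴ * vb).trace = (ρ * (B₀ * B₀)).trace := by
      rw [e, Matrix.trace_mul_comm]
      have e2 : (S * (((B₀ * B₀) ⊗ₖ (1 : Matrix (Fin m) (Fin m) ℂ)) * (S * Wt))) * Wt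
          = S * (((B₀ * B₀) ⊗ₖ (1 : Matrix (Fin m) (Fin m) ℂ)) * S) := by
        calc (S * (((B₀ * B₀) ⊗ₖ (1 : Matrix (Fin m) (Fin m) ℂ)) * (S * Wt))) * Wt
            = S * (((B₀ * B₀) ⊗ₖ (1 : Matrix (Fin m) (Fin m) ℂ)) * (S * (Wt * Wt))) := by
              simp only [Matrix.mul_assoc]
          _ = _ := by rw [hWtWt, Matrix.mul_one]
      rw [e2, sand1]
    unfold SMUR.ip
    rw [etr, htrB0, Complex.sub_re, Complex.mul_re, hμBim]
    ring
  -- (3) ‖va - vah‖² = ε(A)²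
  have hA0k : A₀ ⊗ₖ (1 : Matrix (Fin m) (Fin m) ℂ)
      = A ⊗ₖ (1 : Matrix (Fin m) (Fin m) ℂ)
        - μA • (1 : Matrix (Fin n × Fin m) (Fin n × Fin m) ℂ) := by
    rw [hA0def, sub_kron, Matrix.smul_kronecker, Matrix.one_kronecker_one]
  have hB0k : B₀ ⊗ₖ (1 : Matrix (Fin m) (Fin m) ℂ)
      = B ⊗ₖ (1 : Matrix (Fin m) (Fin m) ℂ)
        - μB • (1 : Matrix (Fin n × Fin m) (Fin n × Fin m) ℂ) := by
    rw [hB0def, sub_kron, Matrix.smul_kronecker, Matrix.one_kronecker_one]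
  have hxe : va - vah = (-Complex.I) • (N₁ * S) := by
    rw [hvadef, hvahdef, ← smul_sub, ← Matrix.sub_mul, hA0k]
    have e : (A ⊗ₖ (1 : Matrix (Fin m) (Fin m) ℂ)
        - μA • (1 : Matrix (Fin n × Fin m) (Fin n × Fin m) ℂ)) - (C₁ - μA • 1) = -N₁ := by
      rw [hN1def]; abel
    rw [e, Matrix.neg_mul, smul_neg, ← neg_smul]
  have hipxx : ip (va - vah) (va - vah) = (((ρ ⊗ₖ P) * (N₁ * N₁)).trace).re := by
    unfold SMUR.ip
    rw [hxe, Matrix.conjTranspose_smul, Matrix.conjTranspose_mul, hSH, hN1H,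
      Matrix.smul_mul, Matrix.mul_smul, smul_smul,
      show star (-Complex.I) * -Complex.I = 1 by simp, one_smul]
    have e1 : (S * N₁) * (N₁ * S) = S * (N₁ * (N₁ * S)) := by simp only [Matrix.mul_assoc]
    rw [e1, Matrix.trace_mul_comm]
    have e2 : (N₁ * (N₁ * S)) * S = N₁ * N₁ * (S * S) := by simp only [Matrix.mul_assoc]
    rw [e2, hSS, Matrix.trace_mul_comm]
  -- (4) ‖vb - vbh‖² = ε(B)²
  have hye : vb - vbh = -(N₂ * (S * Wt)) := by
    rw [hvbdef, hvbhdef, ← Matrix.sub_mul, ← Matrix.sub_mul, hB0k]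
    have e : (B ⊗ₖ (1 : Matrix (Fin m) (Fin m) ℂ)
        - μB • (1 : Matrix (Fin n × Fin m) (Fin n × Fin m) ℂ)) - (C₂ - μB • 1) = -N₂ := by
      rw [hN2def]; abel
    rw [e, Matrix.neg_mul, Matrix.neg_mul, Matrix.mul_assoc]
  have hipyy : ip (vb - vbh) (vb - vbh) = (((ρ ⊗ₖ P) * (N₂ * N₂)).trace).re := by
    unfold SMUR.ip
    rw [hye, Matrix.conjTranspose_neg, Matrix.neg_mul, Matrix.mul_neg, neg_neg,
      Matrix.conjTranspose_mul, Matrix.conjTranspose_mul, hSH, hWtH, hN2H]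
    have e1 : ((Wt * S) * N₂) * (N₂ * (S * Wt)) = Wt * (S * (N₂ * (N₂ * (S * Wt)))) := by
      simp only [Matrix.mul_assoc]
    rw [e1, Matrix.trace_mul_comm]
    have e2 : (S * (N₂ * (N₂ * (S * Wt)))) * Wt = S * (N₂ * (N₂ * (S * (Wt * Wt)))) := by
      simp only [Matrix.mul_assoc]
    rw [e2, hWtWt, Matrix.mul_one, Matrix.trace_mul_comm]
    have e3 : (N₂ * (N₂ * S)) * S = N₂ * N₂ * (S * S) := by simp only [Matrix.mul_assoc]
    rw [e3, hSS, Matrix.trace_mul_comm]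
  -- (5) ⟨va, vb⟩ = D
  have hABc : A₀ * B₀ - B₀ * A₀ = A * B - B * A := by
    rw [hA0def, hB0def]
    simp only [Matrix.sub_mul, Matrix.mul_sub, Matrix.smul_mul, Matrix.mul_smul,
      Matrix.mul_one, Matrix.one_mul, smul_smul]
    module
  have hz' : (R * (B₀ * A₀) * R * W).trace = star ((R * (A₀ * B₀) * R * W).trace) := by
    rw [← Matrix.trace_conjTranspose, Matrix.conjTranspose_mul, Matrix.conjTranspose_mul,
      Matrix.conjTranspose_mul, Matrix.conjTranspose_mul, hRH, hWH, hA0H, hB0H]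
    rw [Matrix.trace_mul_comm]
    simp only [Matrix.mul_assoc]
  have hXWtr : (X * W).trace
      = (-Complex.I) * ((R * (A₀ * B₀) * R * W).trace - star ((R * (A₀ * B₀) * R * W).trace)) := by
    rw [← hz']
    rw [hXdef, hCcdef, ← hABc, Matrix.mul_smul, Matrix.smul_mul, Matrix.smul_mul,
      Matrix.trace_smul]
    rw [Matrix.mul_sub, Matrix.sub_mul, Matrix.sub_mul, Matrix.trace_sub]
    simp only [smul_eq_mul]
  have h2D : traceNorm X = 2 * ((R * (A₀ * B₀) * R * W).trace).im := by
    have h := hWtr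
    rw [hXWtr] at h
    have e : (R * (A₀ * B₀) * R * W).trace - star ((R * (A₀ * B₀) * R * W).trace)
        = ((2 * ((R * (A₀ * B₀) * R * W).trace).im : ℝ) : ℂ) * Complex.I := by
      rw [Complex.star_def, Complex.sub_conj]
    rw [e] at h
    have e2 : (-Complex.I) * (((2 * ((R * (A₀ * B₀) * R * W).trace).im : ℝ) : ℂ) * Complex.I)
        = ((2 * ((R * (A₀ * B₀) * R * W).trace).im : ℝ) : ℂ) := by
      have : (-Complex.I) * Complex.I = 1 := by simp
      calc (-Complex.I) * (((2 * ((R * (A₀ * B₀) * R * W).trace).im : ℝ) : ℂ) * Complex.I)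
          = ((2 * ((R * (A₀ * B₀) * R * W).trace).im : ℝ) : ℂ) * ((-Complex.I) * Complex.I) := by
            ring
        _ = _ := by rw [this, mul_one]
    rw [e2] at h
    exact_mod_cast h.symm
  have hipab : ip va vb = D := by
    have eab : vaᴴ * vb = (-Complex.I) • (S * (((A₀ * B₀) ⊗ₖ (1 : Matrix (Fin m) (Fin m) ℂ))
        * (S * (W ⊗ₖ (1 : Matrix (Fin m) (Fin m) ℂ))))) := by
      rw [hvaH, hvbdef, Matrix.smul_mul, hWtdef]
      congr 1
      simp only [Matrix.mul_assoc]
      rw [kron_collapse]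
    unfold SMUR.ip
    rw [eab, Matrix.trace_smul, sand]
    rw [smul_eq_mul]
    have e : ((-Complex.I) * (R * (A₀ * B₀) * R * W).trace).re
        = ((R * (A₀ * B₀) * R * W).trace).im := by
      simp [Complex.mul_re]
    rw [e, hD, h2D]
    ring
  -- (6) orthogonality ⟨vah, vbh⟩ = 0
  have hgrp : ∀ Z : Matrix (Fin n × Fin m) (Fin n × Fin m) ℂ,
      (C₂ - μB • 1) * ((C₁ - μA • 1) * Z) = (C₁ - μA • 1) * ((C₂ - μB • 1) * Z) := by
    intro Z
    rw [← Matrix.mul_assoc, hcomm0, Matrix.mul_assoc]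
  have hτr : star ((S * ((C₁ - μA • 1) * ((C₂ - μB • 1) * (S * Wt)))).trace)
      = (S * ((C₁ - μA • 1) * ((C₂ - μB • 1) * (S * Wt)))).trace := by
    rw [← Matrix.trace_conjTranspose]
    rw [Matrix.conjTranspose_mul, Matrix.conjTranspose_mul, Matrix.conjTranspose_mul,
      Matrix.conjTranspose_mul, hSH, hWtH]
    rw [Matrix.conjTranspose_sub, Matrix.conjTranspose_sub, hC1H, hC2H,
      Matrix.conjTranspose_smul, Matrix.conjTranspose_smul, Matrix.conjTranspose_one,
      hμAr, hμBr]
    -- now : trace of (((Wt * S) * (C₂ - μB•1)) * (C₁ - μA•1)) * S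
    have e1 : (((Wt * S) * (C₂ - μB • 1)) * (C₁ - μA • 1)) * S
        = Wt * (S * ((C₂ - μB • 1) * ((C₁ - μA • 1) * S))) := by
      simp only [Matrix.mul_assoc]
    rw [e1, Matrix.trace_mul_comm]
    have e2 : (S * ((C₂ - μB • 1) * ((C₁ - μA • 1) * S))) * Wt
        = S * ((C₂ - μB • 1) * ((C₁ - μA • 1) * (S * Wt))) := by
      simp only [Matrix.mul_assoc]
    rw [e2, hgrp]
  have hipperp : ip vah vbh = 0 := by
    have eper : vahᴴ * vbh = (-Complex.I) •
        (S * ((C₁ - μA • 1) * ((C₂ - μB • 1) * (S * Wt)))) := by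
      rw [hvahH, hvbhdef, Matrix.smul_mul]
      congr 1
      simp only [Matrix.mul_assoc]
    unfold SMUR.ip
    rw [eper, Matrix.trace_smul, smul_eq_mul]
    have him : ((S * ((C₁ - μA • 1) * ((C₂ - μB • 1) * (S * Wt)))).trace).im = 0 := by
      have := hτr
      rw [Complex.star_def] at this
      exact Complex.conj_eq_iff_im.mp this
    simp [Complex.mul_re, him]
  -- assemble everything
  have hσA0 : 0 ≤ σA := by rw [hσA]; exact Real.sqrt_nonneg _
  have hσB0 : 0 ≤ σB := by rw [hσB]; exact Real.sqrt_nonneg _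
  have hεA0 : 0 ≤ εA := by rw [hεA]; exact Real.sqrt_nonneg _
  have hεB0 : 0 ≤ εB := by rw [hεB]; exact Real.sqrt_nonneg _
  have hD0 : 0 ≤ D := by rw [hD]; linarith [htn0]
  have hσA2 : ip va va = σA ^ 2 := by
    rw [hσA, Real.sq_sqrt, hipaa]
    rw [← hipaa]
    exact ip_self_nonneg va
  have hσB2 : ip vb vb = σB ^ 2 := by
    rw [hσB, Real.sq_sqrt, hipbb]
    rw [← hipbb]
    exact ip_self_nonneg vb
  have hεA2 : ip (va - vah) (va - vah) = εA ^ 2 := by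
    rw [hεA, Real.sq_sqrt]
    · rw [hipxx, pow_two]
    · rw [pow_two, ← hipxx]
      exact ip_self_nonneg _
  have hεB2 : ip (vb - vbh) (vb - vbh) = εB ^ 2 := by
    rw [hεB, Real.sq_sqrt]
    · rw [hipyy, pow_two]
    · rw [pow_two, ← hipyy]
      exact ip_self_nonneg _
  exact SMUR.branciard va vb vah vbh σA σB εA εB D hσA0 hσB0 hεA0 hεB0 hD0
    hσA2 hσB2 hεA2 hεB2 hipab hipperp
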